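/- Define Minkowskian angles on the plane ℝ^{1,1} by cosh(θ) = ⟨u,v⟩/(‖u‖‖v‖) with ‖u‖ = sqrt(⟨u,u⟩) ∈ ℝ⁺ ∪ iℝ⁺ and θ = φ - iϕ with ϕ ∈ {0, π/2, π, 3π/2} according to the light-cone region (R,U,L,B) containing the vector. Then these angles are additive: for positively oriented non-null vectors u, v, w (none on the light cone), θ_{uw} = θ_{uv} + θ_{vw}. -/

import Mathlib

/-!
In each of the four light-cone regions, `cangle` is built so that `cosh θ(u) · ‖u‖ = u₀` and
`sinh θ(u) · ‖u‖ = u₁`: the real part is the arsinh of the appropriate coordinate ratio, and the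
shift by `-iϕ` multiplies `(cosh, sinh)` by `1, -i, -1, i` (exchanging the two in the time-like
regions), which absorbs the factor `i` of `‖u‖` there. The subtraction formula for `cosh` then
gives `cosh (θ(v) - θ(u)) · ‖u‖ ‖v‖ = u₀v₀ - u₁v₁ = ⟨u, v⟩`, and additivity of
`θ_{uv} = θ(v) - θ(u)` is telescoping.
-/

open Real Complex

noncomputable section

/-- The Minkowski form on the plane `ℝ^{1,1}`: `⟨x,y⟩ = x₀y₀ - x₁y₁`. -/
def Q (x y : Fin 2 → ℝ) : ℝ := x 0 * y 0 - x 1 * y 1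

/-- The complex Minkowski norm `‖u‖ = sqrt⟨u,u⟩ ∈ ℝ⁺ ∪ iℝ⁺`. -/
def mnorm (u : Fin 2 → ℝ) : ℂ :=
  if 0 ≤ Q u u then (Real.sqrt (Q u u) : ℂ) else Complex.I * (Real.sqrt (-(Q u u)) : ℂ)

/-- The complex angle `θ(u) = φ - iϕ` of a non-null vector `u` with the reference vector
`e₁`: the real (hyperbolic) part `φ` is the boost parameter within the light-cone region
of `u`, and the imaginary part `ϕ ∈ {0, π/2, π, 3π/2}` records the region (R, U, L, B). -/
def cangle (u : Fin 2 → ℝ) : ℂ :=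
  if 0 < Q u u ∧ 0 < u 0 then
    (Real.arsinh (u 1 / Real.sqrt (Q u u)) : ℂ)
  else if Q u u < 0 ∧ 0 < u 1 then
    (Real.arsinh (u 0 / Real.sqrt (-(Q u u))) : ℂ) - Complex.I * (π / 2 : ℝ)
  else if 0 < Q u u then
    (Real.arsinh (-(u 1) / Real.sqrt (Q u u)) : ℂ) - Complex.I * (π : ℝ)
  else
    (Real.arsinh (-(u 0) / Real.sqrt (-(Q u u))) : ℂ) - Complex.I * (3 * π / 2 : ℝ)

lemma Complex.cosh_sub_I_mul (z : ℂ) (c : ℝ) :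
    Complex.cosh (z - I * c) =
      Complex.cosh z * Real.cos c - I * (Complex.sinh z * Real.sin c) := by
  rw [show z - I * c = z + (-c : ℝ) * I by push_cast; ring, Complex.cosh_add, cosh_mul_I,
    sinh_mul_I, ← ofReal_cos, ← ofReal_sin, Real.cos_neg, Real.sin_neg]
  push_cast
  ring

lemma Complex.sinh_sub_I_mul (z : ℂ) (c : ℝ) :
    Complex.sinh (z - I * c) =
      Complex.sinh z * Real.cos c - I * (Complex.cosh z * Real.sin c) := by
  rw [show z - I * c = z + (-c : ℝ) * I by push_cast; ring, Complex.sinh_add, cosh_mul_I,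
    sinh_mul_I, ← ofReal_cos, ← ofReal_sin, Real.cos_neg, Real.sin_neg]
  push_cast
  ring

lemma Real.cosh_arsinh_div {a b s : ℝ} (hs : 0 < s) (ha : 0 ≤ a)
    (h : s ^ 2 = a * a - b * b) : Real.cosh (arsinh (b / s)) = a / s := by
  rw [Real.cosh_arsinh, Real.sqrt_eq_iff_eq_sq (by positivity) (div_nonneg ha hs.le)]
  field_simp
  linarith

section

variable {u : Fin 2 → ℝ}

lemma mnorm_of_pos (h : 0 < Q u u) : mnorm u = √(Q u u) := by
  rw [mnorm, if_pos h.le]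

lemma mnorm_of_neg (h : Q u u < 0) : mnorm u = I * √(-Q u u) := by
  rw [mnorm, if_neg h.not_ge]

lemma mnorm_ne_zero (h : Q u u ≠ 0) : mnorm u ≠ 0 := by
  rcases h.lt_or_gt with h | h
  · rw [mnorm_of_neg h]
    exact mul_ne_zero I_ne_zero (ofReal_ne_zero.2 (Real.sqrt_pos.2 (neg_pos.2 h)).ne')
  · rw [mnorm_of_pos h]
    exact ofReal_ne_zero.2 (Real.sqrt_pos.2 h).ne'

lemma cosh_sinh_cangle_mul_mnorm_of_right (hQ : 0 < Q u u) (h0 : 0 < u 0) :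
    Complex.cosh (cangle u) * mnorm u = u 0 ∧ Complex.sinh (cangle u) * mnorm u = u 1 := by
  have hs := Real.sqrt_pos.2 hQ
  have hs' : (√(Q u u) : ℂ) ≠ 0 := ofReal_ne_zero.2 hs.ne'
  have hcosh := Real.cosh_arsinh_div hs h0.le (Real.sq_sqrt hQ.le)
  rw [cangle, if_pos ⟨hQ, h0⟩, mnorm_of_pos hQ, ← ofReal_cosh, ← ofReal_sinh, hcosh,
    Real.sinh_arsinh]
  constructor <;> (push_cast; field_simp)

lemma cosh_sinh_cangle_mul_mnorm_of_up (hQ : Q u u < 0) (h1 : 0 < u 1) :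
    Complex.cosh (cangle u) * mnorm u = u 0 ∧ Complex.sinh (cangle u) * mnorm u = u 1 := by
  have hs := Real.sqrt_pos.2 (neg_pos.2 hQ)
  have hs' : (√(-Q u u) : ℂ) ≠ 0 := ofReal_ne_zero.2 hs.ne'
  have hcosh := Real.cosh_arsinh_div (a := u 1) (b := u 0) hs h1.le
    (by rw [Real.sq_sqrt (neg_pos.2 hQ).le, Q]; ring)
  rw [cangle, if_neg (fun h => hQ.not_gt h.1), if_pos ⟨hQ, h1⟩, mnorm_of_neg hQ,
    cosh_sub_I_mul, sinh_sub_I_mul, ← ofReal_cosh, ← ofReal_sinh, hcosh, Real.sinh_arsinh,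
    Real.cos_pi_div_two, Real.sin_pi_div_two]
  refine ⟨?_, ?_⟩ <;> push_cast <;> field_simp
  · linear_combination -(u 0 : ℂ) * I_mul_I
  · linear_combination -(u 1 : ℂ) * I_mul_I

lemma cosh_sinh_cangle_mul_mnorm_of_left (hQ : 0 < Q u u) (h0 : u 0 < 0) :
    Complex.cosh (cangle u) * mnorm u = u 0 ∧ Complex.sinh (cangle u) * mnorm u = u 1 := by
  have hs := Real.sqrt_pos.2 hQ
  have hs' : (√(Q u u) : ℂ) ≠ 0 := ofReal_ne_zero.2 hs.ne'
  have hcosh := Real.cosh_arsinh_div (a := -u 0) (b := -u 1) hs (neg_nonneg.2 h0.le)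
    (by rw [Real.sq_sqrt hQ.le, Q]; ring)
  rw [cangle, if_neg (fun h => h0.not_gt h.2), if_neg (fun h => hQ.not_gt h.1), if_pos hQ,
    mnorm_of_pos hQ, cosh_sub_I_mul, sinh_sub_I_mul, ← ofReal_cosh, ← ofReal_sinh, hcosh,
    Real.sinh_arsinh, Real.cos_pi, Real.sin_pi]
  constructor <;> (push_cast; field_simp; ring)

lemma cosh_sinh_cangle_mul_mnorm_of_down (hQ : Q u u < 0) (h1 : u 1 < 0) :
    Complex.cosh (cangle u) * mnorm u = u 0 ∧ Complex.sinh (cangle u) * mnorm u = u 1 := by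
  have hs := Real.sqrt_pos.2 (neg_pos.2 hQ)
  have hs' : (√(-Q u u) : ℂ) ≠ 0 := ofReal_ne_zero.2 hs.ne'
  have hcosh := Real.cosh_arsinh_div (a := -u 1) (b := -u 0) hs (neg_nonneg.2 h1.le)
    (by rw [Real.sq_sqrt (neg_pos.2 hQ).le, Q]; ring)
  have hcos : Real.cos (3 * π / 2) = 0 := by
    rw [show 3 * π / 2 = π / 2 + π by ring, Real.cos_add_pi, Real.cos_pi_div_two, neg_zero]
  have hsin : Real.sin (3 * π / 2) = -1 := by
    rw [show 3 * π / 2 = π / 2 + π by ring, Real.sin_add_pi, Real.sin_pi_div_two]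
  rw [cangle, if_neg (fun h => hQ.not_gt h.1), if_neg (fun h => h1.not_gt h.2),
    if_neg hQ.not_gt, mnorm_of_neg hQ, cosh_sub_I_mul, sinh_sub_I_mul, ← ofReal_cosh,
    ← ofReal_sinh, hcosh, Real.sinh_arsinh, hcos, hsin]
  refine ⟨?_, ?_⟩ <;> push_cast <;> field_simp
  · linear_combination -(u 0 : ℂ) * I_mul_I
  · linear_combination -(u 1 : ℂ) * I_mul_I

lemma cosh_sinh_cangle_mul_mnorm (hu : Q u u ≠ 0) :
    Complex.cosh (cangle u) * mnorm u = u 0 ∧ Complex.sinh (cangle u) * mnorm u = u 1 := by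
  have hsq : Q u u = u 0 * u 0 - u 1 * u 1 := rfl
  rcases hu.lt_or_gt with hQ | hQ
  · have h1 : u 1 ≠ 0 := fun h1 => by nlinarith [mul_self_nonneg (u 0)]
    rcases h1.lt_or_gt with h1 | h1
    · exact cosh_sinh_cangle_mul_mnorm_of_down hQ h1
    · exact cosh_sinh_cangle_mul_mnorm_of_up hQ h1
  · have h0 : u 0 ≠ 0 := fun h0 => by nlinarith [mul_self_nonneg (u 1)]
    rcases h0.lt_or_gt with h0 | h0
    · exact cosh_sinh_cangle_mul_mnorm_of_left hQ h0
    · exact cosh_sinh_cangle_mul_mnorm_of_right hQ h0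

end

/-- Minkowskian angles `θ_{uv} := θ(v) - θ(u)` on `ℝ^{1,1}` satisfy the
defining relation `cosh θ_{uv} = ⟨u,v⟩/(‖u‖‖v‖)` for all non-null `u`, `v`, and they are
additive: `θ_{uw} = θ_{uv} + θ_{vw}` for non-null vectors `u`, `v`, `w`. -/
theorem minkowski_angles_additive :
    (∀ u v : Fin 2 → ℝ, Q u u ≠ 0 → Q v v ≠ 0 →
      Complex.cosh (cangle v - cangle u) = (Q u v : ℂ) / (mnorm u * mnorm v)) ∧
    (∀ u v w : Fin 2 → ℝ, Q u u ≠ 0 → Q v v ≠ 0 → Q w w ≠ 0 →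
      cangle w - cangle u = (cangle v - cangle u) + (cangle w - cangle v)) := by
  refine ⟨fun u v hu hv => ?_, fun u v w _ _ _ => by ring⟩
  obtain ⟨hcu, hsu⟩ := cosh_sinh_cangle_mul_mnorm hu
  obtain ⟨hcv, hsv⟩ := cosh_sinh_cangle_mul_mnorm hv
  rw [eq_div_iff (mul_ne_zero (mnorm_ne_zero hu) (mnorm_ne_zero hv)), Complex.cosh_sub, Q]
  push_cast
  rw [← hcu, ← hsu, ← hcv, ← hsv]
  ring
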